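/- Let Y = Gr(2,5) ∩ H ⊂ P^9 where H is the hyperplane {p_{12} = p_{03}} in Plücker coordinates. Then the map assigning to a line in Y (equivalently a flag (V_1,V_3) ∈ Gr(1,3,5)) the 3-space V_3 ∈ Gr(3,5) has fibers: a single point if V_3 ∉ Σ, and the dual plane P(V_3)^∨ ≅ P^2 if V_3 ∈ Σ, where Σ is the smooth quadric 3-fold {V_3 = V_2 + ⟨e_4⟩ : V_2 ∈ Gr(2, ⟨e_0,e_1,e_2,e_3⟩), p_{12}(V_2) = p_{03}(V_2)}. -/
import Mathlib

/-- The skew form on `ℂ⁵` corresponding to the Plücker hyperplane `p₁₂ - p₀₃ = 0`: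
a 2-plane `W` satisfies `p₁₂(W) = p₀₃(W)` iff `W` is isotropic for this form. -/
def Om (a b : Fin 5 → ℂ) : ℂ :=
  (a 1 * b 2 - a 2 * b 1) - (a 0 * b 3 - a 3 * b 0)

/-- A subspace is (totally) isotropic for a form. -/
def IsIsotropic (f : (Fin 5 → ℂ) → (Fin 5 → ℂ) → ℂ) (W : Submodule ℂ (Fin 5 → ℂ)) : Prop :=
  ∀ a ∈ W, ∀ b ∈ W, f a b = 0

/-- `U₄ = ⟨e₀, e₁, e₂, e₃⟩`. -/
noncomputable def U4 : Submodule ℂ (Fin 5 → ℂ) :=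
  Submodule.span ℂ {Pi.single 0 1, Pi.single 1 1, Pi.single 2 1, Pi.single 3 1}

/-- The smooth quadric 3-fold `Σ ⊂ Gr(3,5)`: the 3-spaces `V₃ = V₂ + ⟨e₄⟩` where
`V₂ ∈ Gr(2, ⟨e₀,e₁,e₂,e₃⟩)` satisfies the Plücker relation `p₁₂(V₂) = p₀₃(V₂)`. -/
def SigmaQ : Set (Submodule ℂ (Fin 5 → ℂ)) :=
  {V₃ | ∃ V₂ : Submodule ℂ (Fin 5 → ℂ), Module.finrank ℂ V₂ = 2 ∧ V₂ ≤ U4 ∧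
    IsIsotropic Om V₂ ∧ V₃ = V₂ ⊔ Submodule.span ℂ {Pi.single 4 1}}

/-- The line in `Gr(2,5)` given by the flag `(V₁, V₃)` lies in the hyperplane section
`Y = Gr(2,5) ∩ {p₁₂ = p₀₃}`: every 2-plane `W` with `V₁ ≤ W ≤ V₃` satisfies the
Plücker relation. -/
def LineInY (V₁ V₃ : Submodule ℂ (Fin 5 → ℂ)) : Prop :=
  ∀ W : Submodule ℂ (Fin 5 → ℂ), V₁ ≤ W → W ≤ V₃ → Module.finrank ℂ W = 2 →
    IsIsotropic Om W

open Submodule Module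

noncomputable def Bf : (Fin 5 → ℂ) →ₗ[ℂ] (Fin 5 → ℂ) →ₗ[ℂ] ℂ :=
  LinearMap.mk₂ ℂ Om
    (fun a a' b => by simp only [Om, Pi.add_apply]; ring)
    (fun c a b => by simp only [Om, Pi.smul_apply, smul_eq_mul]; ring)
    (fun a b b' => by simp only [Om, Pi.add_apply]; ring)
    (fun c a b => by simp only [Om, Pi.smul_apply, smul_eq_mul]; ring)

lemma Bf_apply (a b : Fin 5 → ℂ) : Bf a b = Om a b := rfl

lemma Om_skew (a b : Fin 5 → ℂ) : Om a b = - Om b a := by simp only [Om]; ring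

/-- Existence of a nonzero radical vector of `Om` restricted to a 3-dim space. -/
lemma exists_radical (V₃ : Submodule ℂ (Fin 5 → ℂ)) (h3 : Module.finrank ℂ V₃ = 3) :
    ∃ v : Fin 5 → ℂ, v ≠ 0 ∧ v ∈ V₃ ∧ ∀ w ∈ V₃, Om v w = 0 := by
  let b : Basis (Fin 3) ℂ V₃ := finBasisOfFinrankEq ℂ V₃ h3
  set M : Matrix (Fin 3) (Fin 3) ℂ := Matrix.of (fun i j => Om (b i) (b j)) with hM
  have hdet : M.det = 0 := by
    have hT : M.transpose = -M := by
      ext i j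
      simp only [Matrix.transpose_apply, Matrix.neg_apply, hM, Matrix.of_apply]
      rw [Om_skew]
    have h1 : M.det = (-1 : ℂ) ^ (3 : ℕ) * M.det := by
      conv_lhs => rw [← Matrix.det_transpose M, hT, Matrix.det_neg]
      simp
    have h2 : (2 : ℂ) * M.det = 0 := by linear_combination h1
    have := mul_eq_zero.mp h2
    simpa using this
  obtain ⟨c, hc0, hc⟩ := (Matrix.exists_mulVec_eq_zero_iff).mpr hdet
  set vV : V₃ := b.equivFun.symm c with hvV
  have hvV0 : vV ≠ 0 := by
    simp only [hvV, ne_eq, EmbeddingLike.map_eq_zero_iff]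
    exact hc0
  refine ⟨(vV : Fin 5 → ℂ), by simpa using hvV0, vV.2, ?_⟩
  -- first: Om (b i) vV = 0
  have hbase : ∀ i : Fin 3, Om (b i) vV = 0 := by
    intro i
    have hsum : (vV : Fin 5 → ℂ) = ∑ j : Fin 3, c j • ((b j : V₃) : Fin 5 → ℂ) := by
      rw [hvV, Basis.equivFun_symm_apply]
      push_cast
      rfl
    rw [← Bf_apply, hsum, map_sum]
    have : ∀ j, Bf (↑(b i)) (c j • ((b j : V₃) : Fin 5 → ℂ)) = M i j * c j := by
      intro j
      rw [map_smul]
      simp [hM, Bf_apply, mul_comm]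
    rw [Finset.sum_congr rfl (fun j _ => this j)]
    simpa [Matrix.mulVec, dotProduct, Fin.sum_univ_three] using congrFun hc i
  -- then for all w ∈ V₃ : Om w vV = 0
  have hall : ∀ w ∈ V₃, Om w vV = 0 := by
    intro w hw
    let ψ : V₃ →ₗ[ℂ] ℂ := (Bf.flip (vV : Fin 5 → ℂ)).comp V₃.subtype
    have hψ : ψ = 0 := by
      apply b.ext
      intro i
      simpa [ψ, Bf_apply] using hbase i
    have := congrFun (congrArg DFunLike.coe hψ) ⟨w, hw⟩
    simpa [ψ, Bf_apply] using this
  intro w hw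
  rw [Om_skew, hall w hw, neg_zero]

lemma finrank_span_pair {v u : Fin 5 → ℂ} (hv : v ≠ 0) (hu : u ∉ Submodule.span ℂ {v}) :
    Module.finrank ℂ ↥(Submodule.span ℂ {v} ⊔ Submodule.span ℂ {u}) = 2 := by
  have hu0 : u ≠ 0 := fun h => hu (h ▸ Submodule.zero_mem _)
  have h1 : Module.finrank ℂ ↥(Submodule.span ℂ ({v} : Set (Fin 5 → ℂ))) = 1 :=
    finrank_span_singleton hv
  have h2 : Module.finrank ℂ ↥(Submodule.span ℂ ({u} : Set (Fin 5 → ℂ))) = 1 :=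
    finrank_span_singleton hu0
  have hsum := Submodule.finrank_sup_add_finrank_inf_eq
    (Submodule.span ℂ ({v} : Set (Fin 5 → ℂ))) (Submodule.span ℂ ({u} : Set (Fin 5 → ℂ)))
  have hlt : Submodule.span ℂ ({v} : Set (Fin 5 → ℂ)) <
      Submodule.span ℂ ({v} : Set (Fin 5 → ℂ)) ⊔ Submodule.span ℂ {u} := by
    refine lt_of_le_of_ne le_sup_left (fun h => hu ?_)
    rw [h]
    exact Submodule.mem_sup_right (Submodule.mem_span_singleton_self u)
  have hgt := Submodule.finrank_lt_finrank_of_lt hlt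
  omega

lemma mem_pair_decomp {v u a : Fin 5 → ℂ}
    (ha : a ∈ Submodule.span ℂ {v} ⊔ Submodule.span ℂ {u}) :
    ∃ c d : ℂ, a = c • v + d • u := by
  obtain ⟨x, hx, y, hy, rfl⟩ := Submodule.mem_sup.mp ha
  obtain ⟨c, rfl⟩ := Submodule.mem_span_singleton.mp hx
  obtain ⟨d, rfl⟩ := Submodule.mem_span_singleton.mp hy
  exact ⟨c, d, rfl⟩

/-- A 2-dim space containing `span v`, with `v ≠ 0`, equals `span v ⊔ span u` for
any of its elements `u ∉ span v`. -/
lemma two_dim_eq_sup {W : Submodule ℂ (Fin 5 → ℂ)} {v u : Fin 5 → ℂ} (hv : v ≠ 0)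
    (hvW : Submodule.span ℂ {v} ≤ W) (huW : u ∈ W) (hu : u ∉ Submodule.span ℂ {v})
    (hW2 : Module.finrank ℂ W = 2) :
    W = Submodule.span ℂ {v} ⊔ Submodule.span ℂ {u} := by
  refine (Submodule.eq_of_le_of_finrank_le
    (sup_le hvW ((Submodule.span_singleton_le_iff_mem u W).mpr huW)) ?_).symm
  rw [hW2, finrank_span_pair hv hu]

/-- If `v` is in the radical of `Om` on `V₃` then `span v` gives a line in `Y`. -/
lemma lineInY_of_radical {V₃ : Submodule ℂ (Fin 5 → ℂ)} {v : Fin 5 → ℂ} (hv : v ≠ 0)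
    (hrad : ∀ w ∈ V₃, Om v w = 0) : LineInY (Submodule.span ℂ {v}) V₃ := by
  intro W hvW hWV hW2
  have hnle : ¬ (W ≤ Submodule.span ℂ {v}) := by
    intro h
    have := Submodule.finrank_mono h
    rw [hW2, finrank_span_singleton hv] at this
    omega
  obtain ⟨u, huW, hu⟩ := SetLike.not_le_iff_exists.mp hnle
  have hWeq := two_dim_eq_sup hv hvW huW hu hW2
  intro a ha b hb
  rw [hWeq] at ha hb
  obtain ⟨c1, c2, rfl⟩ := mem_pair_decomp ha
  obtain ⟨d1, d2, rfl⟩ := mem_pair_decomp hb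
  have hvu : Om v u = 0 := hrad u (hWV huW)
  have : Om (c1 • v + c2 • u) (d1 • v + d2 • u) = (c1 * d2 - c2 * d1) * Om v u := by
    simp only [Om, Pi.add_apply, Pi.smul_apply, smul_eq_mul]; ring
  rw [this, hvu, mul_zero]

/-- Every line in `Y` through a point of `V₃` consists of radical vectors. -/
lemma radical_of_lineInY {V₃ V₁ : Submodule ℂ (Fin 5 → ℂ)} (h3 : Module.finrank ℂ V₃ = 3)
    (h1 : Module.finrank ℂ V₁ = 1) (hle : V₁ ≤ V₃) (hL : LineInY V₁ V₃) :
    ∀ v ∈ V₁, ∀ w ∈ V₃, Om v w = 0 := by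
  -- get a spanning vector
  obtain ⟨v₀, hv₀V, hv₀⟩ := (Submodule.ne_bot_iff _).mp (fun h => by
    rw [h, finrank_bot] at h1; omega : V₁ ≠ ⊥)
  have hspan : V₁ = Submodule.span ℂ {v₀} := by
    refine (Submodule.eq_of_le_of_finrank_le
      ((Submodule.span_singleton_le_iff_mem v₀ V₁).mpr hv₀V) ?_).symm
    rw [h1, finrank_span_singleton hv₀]
  have key : ∀ w ∈ V₃, Om v₀ w = 0 := by
    intro w hw
    by_cases hwv : w ∈ Submodule.span ℂ ({v₀} : Set (Fin 5 → ℂ))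
    · obtain ⟨c, rfl⟩ := Submodule.mem_span_singleton.mp hwv
      simp only [Om, Pi.smul_apply, smul_eq_mul]; ring
    · have hW2 : Module.finrank ℂ
          ↥(Submodule.span ℂ {v₀} ⊔ Submodule.span ℂ {w}) = 2 := finrank_span_pair hv₀ hwv
      have hiso := hL (Submodule.span ℂ {v₀} ⊔ Submodule.span ℂ {w})
        (hspan ▸ le_sup_left) (sup_le (hspan ▸ hle)
          ((Submodule.span_singleton_le_iff_mem w V₃).mpr hw)) hW2
      exact hiso v₀ (Submodule.mem_sup_left (Submodule.mem_span_singleton_self v₀))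
        w (Submodule.mem_sup_right (Submodule.mem_span_singleton_self w))
  intro v hv w hw
  rw [hspan] at hv
  obtain ⟨c, rfl⟩ := Submodule.mem_span_singleton.mp hv
  have := key w hw
  have : Om (c • v₀) w = c * Om v₀ w := by
    simp only [Om, Pi.smul_apply, smul_eq_mul]; ring
  rw [this, key w hw, mul_zero]

/-- Membership in `U4` is having vanishing last coordinate. -/
lemma mem_U4_iff (x : Fin 5 → ℂ) : x ∈ U4 ↔ x 4 = 0 := by
  constructor
  · intro hx
    have : U4 ≤ LinearMap.ker (LinearMap.proj (R := ℂ) (φ := fun _ : Fin 5 => ℂ) 4) := by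
      rw [U4, Submodule.span_le]
      intro y hy
      simp only [Set.mem_insert_iff, Set.mem_singleton_iff] at hy
      rcases hy with rfl | rfl | rfl | rfl <;>
        simp [LinearMap.mem_ker, Pi.single_eq_of_ne]
    simpa using this hx
  · intro hx
    have : x = x 0 • (Pi.single 0 1 : Fin 5 → ℂ) + x 1 • (Pi.single 1 1 : Fin 5 → ℂ)
        + x 2 • (Pi.single 2 1 : Fin 5 → ℂ) + x 3 • (Pi.single 3 1 : Fin 5 → ℂ) := by
      funext i
      fin_cases i <;> simp [Pi.single_apply] <;> exact hx
    rw [this]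
    apply Submodule.add_mem
    apply Submodule.add_mem
    apply Submodule.add_mem
    all_goals
      exact Submodule.smul_mem _ _ (Submodule.subset_span (by simp))

lemma e4_notMem_U4 : (Pi.single 4 1 : Fin 5 → ℂ) ∉ U4 := by
  rw [mem_U4_iff]; simp

/-- `V₃ ∈ SigmaQ` implies `V₃` is totally isotropic. -/
lemma isotropic_of_sigma {V₃ : Submodule ℂ (Fin 5 → ℂ)} (h : V₃ ∈ SigmaQ) :
    IsIsotropic Om V₃ := by
  obtain ⟨V₂, _, _, hiso, rfl⟩ := h
  intro a ha b hb
  obtain ⟨p, hp, x, hx, rfl⟩ := Submodule.mem_sup.mp ha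
  obtain ⟨q, hq, y, hy, rfl⟩ := Submodule.mem_sup.mp hb
  obtain ⟨c, rfl⟩ := Submodule.mem_span_singleton.mp hx
  obtain ⟨d, rfl⟩ := Submodule.mem_span_singleton.mp hy
  have hpq : Om p q = 0 := hiso p hp q hq
  have : Om (p + c • (Pi.single 4 1 : Fin 5 → ℂ)) (q + d • (Pi.single 4 1 : Fin 5 → ℂ)) = Om p q := by
    simp only [Om, Pi.add_apply, Pi.smul_apply, smul_eq_mul, Pi.single_eq_of_ne
      (by decide : (1 : Fin 5) ≠ 4), Pi.single_eq_of_ne (by decide : (2 : Fin 5) ≠ 4),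
      Pi.single_eq_of_ne (by decide : (0 : Fin 5) ≠ 4),
      Pi.single_eq_of_ne (by decide : (3 : Fin 5) ≠ 4)]
    ring
  rw [this, hpq]

/-- A totally isotropic 3-dim space contains `e₄`. -/
lemma e4_mem_of_isotropic {V₃ : Submodule ℂ (Fin 5 → ℂ)} (h3 : Module.finrank ℂ V₃ = 3)
    (hiso : IsIsotropic Om V₃) : (Pi.single 4 1 : Fin 5 → ℂ) ∈ V₃ := by
  -- the map V₃ → dualAnnihilator V₃ induced by Bf
  have hmap : ∀ a : V₃, Bf (a : Fin 5 → ℂ) ∈ V₃.dualAnnihilator := by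
    intro a
    rw [Submodule.mem_dualAnnihilator]
    intro w hw
    exact hiso a a.2 w hw
  let f : V₃ →ₗ[ℂ] V₃.dualAnnihilator :=
    LinearMap.codRestrict V₃.dualAnnihilator (Bf.comp V₃.subtype) (fun a => hmap a)
  have hann : Module.finrank ℂ V₃.dualAnnihilator = 2 := by
    have hq := LinearEquiv.finrank_eq (Subspace.quotEquivAnnihilator V₃)
    have hq2 := Submodule.finrank_quotient_add_finrank V₃
    have h5 : Module.finrank ℂ (Fin 5 → ℂ) = 5 := by simp
    omega
  have hker : LinearMap.ker f ≠ ⊥ := by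
    intro hk
    have := LinearMap.finrank_range_add_finrank_ker f
    rw [hk, finrank_bot, add_zero, h3] at this
    have hle := Submodule.finrank_le (LinearMap.range f)
    omega
  obtain ⟨a, haV, ha0⟩ := (Submodule.ne_bot_iff _).mp hker
  have hBa : Bf ((a : Fin 5 → ℂ)) = 0 := by
    have : (f a : Module.Dual ℂ (Fin 5 → ℂ)) = 0 := by
      rw [LinearMap.mem_ker] at haV
      rw [haV]; rfl
    simpa [f, LinearMap.codRestrict] using this
  -- evaluate at standard basis vectors to get coordinates
  have hev : ∀ b : Fin 5 → ℂ, Om (a : Fin 5 → ℂ) b = 0 := by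
    intro b
    have := congrFun (congrArg DFunLike.coe hBa) b
    simpa [Bf_apply] using this
  set av : Fin 5 → ℂ := (a : Fin 5 → ℂ) with hav
  have h0 : av 0 = 0 := by
    have := hev (Pi.single 3 1)
    simpa [Om, Pi.single_apply] using this
  have h1' : av 1 = 0 := by
    have := hev (Pi.single 2 1)
    simpa [Om, Pi.single_apply] using this
  have h2' : av 2 = 0 := by
    have := hev (Pi.single 1 1)
    simpa [Om, Pi.single_apply] using this
  have h3' : av 3 = 0 := by
    have := hev (Pi.single 0 1)
    simpa [Om, Pi.single_apply] using this
  have h4ne : av 4 ≠ 0 := by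
    intro h4
    apply ha0
    have : av = 0 := by
      funext i; fin_cases i <;> assumption
    exact Subtype.ext this
  have haeq : av = av 4 • (Pi.single 4 1 : Fin 5 → ℂ) := by
    funext i
    fin_cases i <;> simp [Pi.single_apply] <;> assumption
  have : (Pi.single 4 1 : Fin 5 → ℂ) = (av 4)⁻¹ • av := by
    funext i
    fin_cases i <;> simp [h0, h1', h2', h3', inv_mul_cancel₀ h4ne]
  rw [this]
  exact Submodule.smul_mem _ _ a.2

/-- A totally isotropic 3-dim space is in `SigmaQ`. -/
lemma sigma_of_isotropic {V₃ : Submodule ℂ (Fin 5 → ℂ)} (h3 : Module.finrank ℂ V₃ = 3)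
    (hiso : IsIsotropic Om V₃) : V₃ ∈ SigmaQ := by
  have he4 := e4_mem_of_isotropic h3 hiso
  set V₂ : Submodule ℂ (Fin 5 → ℂ) := V₃ ⊓ U4 with hV₂
  set E : Submodule ℂ (Fin 5 → ℂ) := Submodule.span ℂ {Pi.single 4 1} with hE
  have hsup : V₂ ⊔ E = V₃ := by
    apply le_antisymm
    · exact sup_le inf_le_left ((Submodule.span_singleton_le_iff_mem _ _).mpr he4)
    · intro v hv
      rw [Submodule.mem_sup]
      refine ⟨v - v 4 • (Pi.single 4 1 : Fin 5 → ℂ), ?_, v 4 • (Pi.single 4 1 : Fin 5 → ℂ), ?_, by abel⟩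
      · refine Submodule.mem_inf.mpr ⟨Submodule.sub_mem _ hv (Submodule.smul_mem _ _ he4), ?_⟩
        rw [mem_U4_iff]
        simp
      · exact Submodule.smul_mem _ _ (Submodule.mem_span_singleton_self _)
  have hinf : V₂ ⊓ E = ⊥ := by
    rw [eq_bot_iff]
    intro x hx
    obtain ⟨hx2, hxE⟩ := Submodule.mem_inf.mp hx
    obtain ⟨c, rfl⟩ := Submodule.mem_span_singleton.mp hxE
    have := (mem_U4_iff _).mp (Submodule.mem_inf.mp hx2).2
    simp only [Pi.smul_apply, Pi.single_eq_same, smul_eq_mul, mul_one] at this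
    simp [this]
  have hE1 : Module.finrank ℂ E = 1 := by
    rw [hE]
    exact finrank_span_singleton (by
      intro h
      have := congrFun h (4 : Fin 5)
      simp [Pi.single_eq_same] at this)
  have h2 : Module.finrank ℂ V₂ = 2 := by
    have := Submodule.finrank_sup_add_finrank_inf_eq V₂ E
    rw [hsup, hinf, h3, hE1, finrank_bot] at this
    omega
  exact ⟨V₂, h2, inf_le_right, fun a ha b hb =>
    hiso a (Submodule.mem_inf.mp ha).1 b (Submodule.mem_inf.mp hb).1, hsup.symm⟩

/-- Two distinct radical lines force total isotropy. -/
lemma isotropic_of_two_radical {V₃ : Submodule ℂ (Fin 5 → ℂ)} (h3 : Module.finrank ℂ V₃ = 3)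
    {v v' : Fin 5 → ℂ} (hv : v ≠ 0) (hvV : v ∈ V₃) (hradv : ∀ w ∈ V₃, Om v w = 0)
    (hv' : v' ∉ Submodule.span ℂ {v}) (hv'V : v' ∈ V₃) (hradv' : ∀ w ∈ V₃, Om v' w = 0) :
    IsIsotropic Om V₃ := by
  set P : Submodule ℂ (Fin 5 → ℂ) := Submodule.span ℂ {v} ⊔ Submodule.span ℂ {v'} with hP
  have hP2 : Module.finrank ℂ P = 2 := finrank_span_pair hv hv'
  have hPle : P ≤ V₃ := sup_le ((Submodule.span_singleton_le_iff_mem _ _).mpr hvV)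
    ((Submodule.span_singleton_le_iff_mem _ _).mpr hv'V)
  have hnle : ¬ (V₃ ≤ P) := by
    intro h
    have := Submodule.finrank_mono h
    omega
  obtain ⟨u, huV, huP⟩ := SetLike.not_le_iff_exists.mp hnle
  have hVeq : P ⊔ Submodule.span ℂ {u} = V₃ := by
    refine Submodule.eq_of_le_of_finrank_le
      (sup_le hPle ((Submodule.span_singleton_le_iff_mem _ _).mpr huV)) ?_
    have hlt : P < P ⊔ Submodule.span ℂ {u} := by
      refine lt_of_le_of_ne le_sup_left (fun h => huP ?_)
      rw [h]
      exact Submodule.mem_sup_right (Submodule.mem_span_singleton_self u)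
    have := Submodule.finrank_lt_finrank_of_lt hlt
    omega
  intro a ha b hb
  rw [← hVeq] at ha hb
  obtain ⟨p, hp, x, hx, rfl⟩ := Submodule.mem_sup.mp ha
  obtain ⟨q, hq, y, hy, rfl⟩ := Submodule.mem_sup.mp hb
  obtain ⟨c3, rfl⟩ := Submodule.mem_span_singleton.mp hx
  obtain ⟨d3, rfl⟩ := Submodule.mem_span_singleton.mp hy
  obtain ⟨c1, c2, rfl⟩ := mem_pair_decomp hp
  obtain ⟨d1, d2, rfl⟩ := mem_pair_decomp hq
  have e1 : Om v v' = 0 := hradv v' hv'V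
  have e2 : Om v u = 0 := hradv u huV
  have e3 : Om v' u = 0 := hradv' u huV
  have key : Om (c1 • v + c2 • v' + c3 • u) (d1 • v + d2 • v' + d3 • u)
      = (c1 * d2 - c2 * d1) * Om v v' + (c1 * d3 - c3 * d1) * Om v u
        + (c2 * d3 - c3 * d2) * Om v' u := by
    simp only [Om, Pi.add_apply, Pi.smul_apply, smul_eq_mul]; ring
  rw [key, e1, e2, e3]
  ring

/-- Fibers of the map from lines in `Y = Gr(2,5) ∩ {p₁₂ = p₀₃}` to `Gr(3,5)`,
`(V₁,V₃) ↦ V₃`: a single point over `V₃ ∉ Σ`, and the dual plane `P(V₃)^∨ ≅ ℙ²`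
(all 1-dimensional subspaces of `V₃`) over `V₃ ∈ Σ`. -/
theorem stmt10 (V₃ : Submodule ℂ (Fin 5 → ℂ)) (h3 : Module.finrank ℂ V₃ = 3) :
    (V₃ ∉ SigmaQ → ∃! V₁ : Submodule ℂ (Fin 5 → ℂ),
        Module.finrank ℂ V₁ = 1 ∧ V₁ ≤ V₃ ∧ LineInY V₁ V₃) ∧
    (V₃ ∈ SigmaQ →
        {V₁ : Submodule ℂ (Fin 5 → ℂ) | Module.finrank ℂ V₁ = 1 ∧ V₁ ≤ V₃ ∧ LineInY V₁ V₃}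
          = {V₁ : Submodule ℂ (Fin 5 → ℂ) | Module.finrank ℂ V₁ = 1 ∧ V₁ ≤ V₃}) := by
  constructor
  · intro hns
    obtain ⟨v, hv0, hvV, hrad⟩ := exists_radical V₃ h3
    refine ⟨Submodule.span ℂ {v}, ⟨finrank_span_singleton hv0,
      (Submodule.span_singleton_le_iff_mem _ _).mpr hvV, lineInY_of_radical hv0 hrad⟩, ?_⟩
    rintro V₁' ⟨h1', hle', hL'⟩
    -- get a spanning vector of V₁'
    obtain ⟨v', hv'V₁, hv'0⟩ := (Submodule.ne_bot_iff _).mp (fun h => by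
      rw [h, finrank_bot] at h1'; omega : V₁' ≠ ⊥)
    have hspan' : V₁' = Submodule.span ℂ {v'} := by
      refine (Submodule.eq_of_le_of_finrank_le
        ((Submodule.span_singleton_le_iff_mem v' V₁').mpr hv'V₁) ?_).symm
      rw [h1', finrank_span_singleton hv'0]
    have hrad' : ∀ w ∈ V₃, Om v' w = 0 :=
      fun w hw => radical_of_lineInY h3 h1' hle' hL' v' hv'V₁ w hw
    by_contra hne
    have hv'notin : v' ∉ Submodule.span ℂ ({v} : Set (Fin 5 → ℂ)) := by
      intro hmem
      apply hne
      rw [hspan']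
      refine Submodule.eq_of_le_of_finrank_le
        ((Submodule.span_singleton_le_iff_mem v' _).mpr hmem) ?_
      rw [finrank_span_singleton hv0, finrank_span_singleton hv'0]
    exact hns (sigma_of_isotropic h3
      (isotropic_of_two_radical h3 hv0 hvV hrad hv'notin (hle' hv'V₁) hrad'))
  · intro hs
    have hiso := isotropic_of_sigma hs
    ext V₁
    simp only [Set.mem_setOf_eq, and_assoc]
    constructor
    · rintro ⟨h1, h2, _⟩
      exact ⟨h1, h2⟩
    · rintro ⟨h1, h2⟩
      refine ⟨h1, h2, fun W _ hWV _ a ha b hb => hiso a (hWV ha) b (hWV hb)⟩
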